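/- Let f be a monic real-rooted polynomial of degree n and g a monic real-rooted polynomial of degree n−1 that interlaces f. Then for any two monic real-rooted degree n polynomials f_1, f_2 both interlaced by g, every convex combination λf_1 + (1−λ)f_2 (0 ≤ λ ≤ 1) is real-rooted, and its largest root lies between the minimum and maximum of the largest roots of f_1 and f_2. -/

import Mathlib

open scoped Classical
open Polynomial

/-- A real polynomial is real-rooted if it has a full set of real roots
(counted with multiplicity). -/
def RealRooted (f : Polynomial ℝ) : Prop := Multiset.card f.roots = f.natDegree

/-- The roots of a real polynomial, sorted in increasing order. -/
noncomputable def sortedRoots (f : Polynomial ℝ) : List ℝ := f.roots.sort (· ≤ ·)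

/-- `g` interlaces `f`: both are real-rooted, `deg g = deg f - 1`, and the sorted
roots satisfy `β₁ ≤ α₁ ≤ β₂ ≤ ⋯ ≤ α_{n-1} ≤ β_n`. -/
def Interlaces (g f : Polynomial ℝ) : Prop :=
  RealRooted f ∧ RealRooted g ∧ g.natDegree + 1 = f.natDegree ∧
  ∀ k, k < g.natDegree →
    (sortedRoots f).getD k 0 ≤ (sortedRoots g).getD k 0 ∧
    (sortedRoots g).getD k 0 ≤ (sortedRoots f).getD (k + 1) 0

/-- The largest real root of a polynomial. -/
noncomputable def maxRoot (f : Polynomial ℝ) : ℝ := sSup {x : ℝ | f.IsRoot x}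

/-!
Read through the root-counting functions `N_p(x) = #{roots of p that are ≤ x}`, "`g` interlaces
`f`" says `N_g ≤ N_f ≤ N_g + 1`, which survives dividing `f` and `g` by a common factor `X - c`.

Real-rootedness of `h = l • f₁ + (1 - l) • f₂` then goes by induction on the degree. A root common
to `g`, `f₁` and `f₂` factors out of `h`, and the quotients still have a common interlacing.
Otherwise, at a point `a` below all roots, at the roots `α₁ ≤ ⋯ ≤ α_{n-1}` of `g`, and at a point
`b` above all roots, both `f₁` and `f₂` have the weak sign `(-1)^(n-j)` at the `j`-th point and do
not both vanish there; so `h` changes sign strictly `n` times along these points and has `n` real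
roots.

For the largest root, `h > 0` beyond both largest roots. If the largest root `A` of `f₁` is the
smaller one, then `A` lies between the largest roots of `g` and of `f₂`, where `f₂ ≤ 0`; so
`h(A) ≤ 0`, and `h` has a root at or beyond `A`.
-/

namespace List

variable {α : Type*} [LinearOrder α] {l : List α}

theorem SortedLE.getD_le_getD (hl : l.SortedLE) {i j : ℕ} (hij : i ≤ j) (hj : j < l.length)
    (d : α) : l.getD i d ≤ l.getD j d := by
  rw [getD_eq_getElem _ _ (hij.trans_lt hj), getD_eq_getElem _ _ hj]
  exact hl.getElem_le_getElem_of_le hij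

theorem SortedLE.monotone_getD (hl : l.SortedLE) {b : α} (hb : ∀ y ∈ l, y ≤ b) :
    Monotone (l.getD · b) := by
  intro i j hij
  show l.getD i b ≤ l.getD j b
  by_cases hj : j < l.length
  · exact hl.getD_le_getD hij hj b
  rw [getD_eq_default _ _ (not_lt.mp hj)]
  by_cases hi : i < l.length
  · rw [getD_eq_getElem _ _ hi]
    exact hb _ (getElem_mem hi)
  · rw [getD_eq_default _ _ (not_lt.mp hi)]

theorem SortedLE.getD_le_iff_lt_countP (hl : l.SortedLE) {k : ℕ} (hk : k < l.length)
    (d x : α) : l.getD k d ≤ x ↔ k < l.countP (· ≤ x) := by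
  induction l generalizing k with
  | nil => simp at hk
  | cons y l ih =>
    obtain ⟨hy, hl⟩ := pairwise_cons.mp hl.pairwise
    by_cases hyx : y ≤ x
    · cases k with
      | zero => simp [hyx]
      | succ k =>
        rw [getD_cons_succ, countP_cons_of_pos (by simpa using hyx), Nat.add_lt_add_iff_right]
        exact ih hl.sortedLE (by simpa using hk)
    · have hcount : (y :: l).countP (· ≤ x) = 0 :=
        countP_eq_zero.mpr fun z hz hzx => hyx <| by
          rcases mem_cons.mp hz with rfl | hz
          · simpa using hzx
          · exact (hy z hz).trans (by simpa using hzx)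
      simp only [hcount, Nat.not_lt_zero, iff_false, not_le]
      calc x < y := not_le.mp hyx
        _ ≤ (y :: l).getD k d := by
          simpa using (pairwise_cons.mpr ⟨hy, hl⟩).sortedLE.getD_le_getD (Nat.zero_le k) hk d

theorem interlace_iff_countP_le {β γ : List α} (hβ : β.SortedLE) (hγ : γ.SortedLE)
    (hlen : γ.length + 1 = β.length) (d : α) :
    (∀ k < γ.length, β.getD k d ≤ γ.getD k d ∧ γ.getD k d ≤ β.getD (k + 1) d) ↔
      ∀ x, γ.countP (· ≤ x) ≤ β.countP (· ≤ x) ∧ β.countP (· ≤ x) ≤ γ.countP (· ≤ x) + 1 := by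
  constructor
  · intro h x
    set i := β.countP (· ≤ x)
    set j := γ.countP (· ≤ x)
    have hi : i ≤ β.length := countP_le_length
    have hj : j ≤ γ.length := countP_le_length
    constructor
    · by_contra! hij
      have hγi : γ.getD i d ≤ x := (hγ.getD_le_iff_lt_countP (by omega) d x).mpr hij
      exact lt_irrefl i <|
        (hβ.getD_le_iff_lt_countP (by omega) d x).mp ((h i (by omega)).1.trans hγi)
    · by_contra! hji
      have hβj : β.getD (j + 1) d ≤ x := (hβ.getD_le_iff_lt_countP (by omega) d x).mpr hji
      exact lt_irrefl j <|
        (hγ.getD_le_iff_lt_countP (by omega) d x).mp ((h j (by omega)).2.trans hβj)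
  · intro h k hk
    constructor
    · rw [hβ.getD_le_iff_lt_countP (by omega)]
      exact ((hγ.getD_le_iff_lt_countP hk d _).mp le_rfl).trans_le (h _).1
    · rw [hγ.getD_le_iff_lt_countP hk]
      have := (hβ.getD_le_iff_lt_countP (by omega : k + 1 < β.length) d _).mp le_rfl
      have := (h (β.getD (k + 1) d)).2
      omega

end List

namespace Polynomial

variable {R : Type*} [CommRing R]

theorem roots_X_sub_C_mul [IsDomain R] {p : R[X]} (hp : p ≠ 0) (c : R) :
    ((X - C c) * p).roots = c ::ₘ p.roots := by
  rw [roots_mul (mul_ne_zero (X_sub_C_ne_zero c) hp), roots_X_sub_C, Multiset.singleton_add]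

theorem natDegree_X_sub_C_mul [Nontrivial R] [NoZeroDivisors R] {p : R[X]} (hp : p ≠ 0) (c : R) :
    ((X - C c) * p).natDegree = p.natDegree + 1 := by
  rw [natDegree_mul (X_sub_C_ne_zero c) hp, natDegree_X_sub_C, add_comm]

theorem eval_smul_add_one_sub_smul (l x : R) (p q : R[X]) :
    (l • p + (1 - l) • q).eval x = l * p.eval x + (1 - l) * q.eval x := by
  simp only [eval_add, eval_smul, smul_eq_mul]

theorem degree_smul_sub_lt [Nontrivial R] {p q : R[X]} (hp : p.Monic) (hq : q.Monic)
    (hd : p.natDegree = q.natDegree) (l : R) : (l • (p - q)).degree < q.degree := by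
  refine (degree_smul_le l _).trans_lt (degree_sub_lt_right ?_ hq.ne_zero ?_)
  · rw [degree_eq_natDegree hp.ne_zero, degree_eq_natDegree hq.ne_zero, hd]
  · rw [hp.leadingCoeff, hq.leadingCoeff]

theorem Monic.smul_add_one_sub_smul {p q : R[X]} (hp : p.Monic) (hq : q.Monic)
    (hd : p.natDegree = q.natDegree) (l : R) : (l • p + (1 - l) • q).Monic := by
  nontriviality R
  rw [show l • p + (1 - l) • q = q + l • (p - q) by module]
  exact hq.add_of_left (degree_smul_sub_lt hp hq hd l)

theorem natDegree_smul_add_one_sub_smul [Nontrivial R] {p q : R[X]} (hp : p.Monic) (hq : q.Monic)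
    (hd : p.natDegree = q.natDegree) (l : R) :
    (l • p + (1 - l) • q).natDegree = q.natDegree := by
  rw [show l • p + (1 - l) • q = q + l • (p - q) by module]
  exact natDegree_add_eq_left_of_degree_lt (degree_smul_sub_lt hp hq hd l)

theorem exists_isRoot_mem_Ioo_of_eval_mul_neg (p : ℝ[X]) {a b : ℝ} (hab : a ≤ b)
    (h : p.eval a * p.eval b < 0) : ∃ r ∈ Set.Ioo a b, p.IsRoot r := by
  rcases mul_neg_iff.mp h with ⟨ha, hb⟩ | ⟨ha, hb⟩
  · exact intermediate_value_Ioo' hab p.continuousOn (show (0 : ℝ) ∈ Set.Ioo _ _ from ⟨hb, ha⟩)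
  · exact intermediate_value_Ioo hab p.continuousOn (show (0 : ℝ) ∈ Set.Ioo _ _ from ⟨ha, hb⟩)

theorem le_card_filter_roots_of_sign_changes (p : ℝ[X]) (t : ℕ → ℝ) (m : ℕ)
    (hmono : ∀ j < m, t j ≤ t (j + 1))
    (hsign : ∀ j < m, p.eval (t j) * p.eval (t (j + 1)) < 0) :
    m ≤ (p.roots.toFinset.filter (· < t m)).card := by
  induction m with
  | zero => exact Nat.zero_le _
  | succ m ih =>
    have hm := hsign m m.lt_succ_self
    have hp : p ≠ 0 := by rintro rfl; simp at hm
    obtain ⟨r, ⟨hmr, hrm⟩, hr⟩ :=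
      p.exists_isRoot_mem_Ioo_of_eval_mul_neg (hmono m m.lt_succ_self) hm
    have hsub : insert r (p.roots.toFinset.filter (· < t m)) ⊆
        p.roots.toFinset.filter (· < t (m + 1)) := by
      refine Finset.insert_subset (by simpa [mem_roots hp] using ⟨hr, hrm⟩) fun y hy => ?_
      simp only [Finset.mem_filter] at hy ⊢
      exact ⟨hy.1, hy.2.trans_le (hmono m m.lt_succ_self)⟩
    calc m + 1 ≤ (insert r (p.roots.toFinset.filter (· < t m))).card := by
          rw [Finset.card_insert_of_notMem (by simp [hmr.le])]
          exact Nat.succ_le_succ <|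
            ih (fun j hj => hmono j (by omega)) fun j hj => hsign j (by omega)
      _ ≤ _ := Finset.card_le_card hsub

end Polynomial

theorem Multiset.exists_forall_mem_Ioo (s : Multiset ℝ) :
    ∃ a b, a < b ∧ ∀ x ∈ s, a < x ∧ x < b := by
  obtain ⟨M, hM⟩ := (s.map abs).toFinset.exists_le
  refine ⟨-(|M| + 1), |M| + 1, by linarith [abs_nonneg M], fun x hx => ?_⟩
  have hxM : |x| ≤ M := hM |x| (by simpa using ⟨x, hx, rfl⟩)
  constructor <;> linarith [neg_abs_le x, le_abs_self x, le_abs_self M]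

theorem mul_neg_of_neg_one_pow_mul_pos {k : ℕ} {u v : ℝ} (hu : 0 < (-1) ^ (k + 1) * u)
    (hv : 0 < (-1) ^ k * v) : u * v < 0 := by
  rcases neg_one_pow_eq_or ℝ k with h | h <;> rw [pow_succ, h] at hu <;> rw [h] at hv <;> nlinarith

variable {f g f₁ f₂ : ℝ[X]} {l : ℝ}

theorem sortedRoots_sortedLE (f : ℝ[X]) : (sortedRoots f).SortedLE :=
  (Multiset.pairwise_sort _ _).sortedLE

theorem coe_sortedRoots (f : ℝ[X]) : (sortedRoots f : Multiset ℝ) = f.roots :=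
  Multiset.sort_eq _ _

theorem RealRooted.length_sortedRoots (hf : RealRooted f) :
    (sortedRoots f).length = f.natDegree :=
  (Multiset.length_sort _).trans hf

theorem getD_sortedRoots_mem_roots {k : ℕ} (hk : k < (sortedRoots f).length) (d : ℝ) :
    (sortedRoots f).getD k d ∈ f.roots := by
  rw [List.getD_eq_getElem _ _ hk, ← Multiset.mem_sort (· ≤ ·)]
  exact List.getElem_mem hk

theorem exists_getD_sortedRoots_eq {x : ℝ} (hx : x ∈ f.roots) :
    ∃ k < (sortedRoots f).length, (sortedRoots f).getD k 0 = x := by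
  obtain ⟨k, hk, rfl⟩ := List.mem_iff_getElem.mp ((Multiset.mem_sort (· ≤ ·)).mpr hx)
  exact ⟨k, hk, List.getD_eq_getElem _ 0 hk⟩

theorem realRooted_X_sub_C_mul_iff (hf : f ≠ 0) (c : ℝ) :
    RealRooted ((X - C c) * f) ↔ RealRooted f := by
  simp only [RealRooted, roots_X_sub_C_mul hf, natDegree_X_sub_C_mul hf, Multiset.card_cons,
    Nat.add_right_cancel_iff]

theorem RealRooted.of_neg_one_pow_mul_eval_pos {t : ℕ → ℝ} (hmono : Monotone t)
    (hsign : ∀ j ≤ f.natDegree, 0 < (-1) ^ (f.natDegree - j) * f.eval (t j)) : RealRooted f := by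
  have hcount := le_card_filter_roots_of_sign_changes f t f.natDegree
    (fun j _ => hmono j.le_succ) fun j hj => mul_neg_of_neg_one_pow_mul_pos
      (by rw [show f.natDegree - (j + 1) + 1 = f.natDegree - j by omega]; exact hsign j hj.le)
      (hsign (j + 1) hj)
  exact le_antisymm (card_roots' f)
    (hcount.trans ((Finset.card_filter_le _ _).trans (Multiset.toFinset_card_le _)))

theorem RealRooted.exists_isRoot (hr : RealRooted f) (hf : 0 < f.natDegree) :
    ∃ x, f.IsRoot x := by
  obtain ⟨x, hx⟩ := Multiset.card_pos_iff_exists_mem.mp (hr ▸ hf)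
  exact ⟨x, isRoot_of_mem_roots hx⟩

theorem Polynomial.Monic.eval_eq_prod_sortedRoots (hf : f.Monic) (hr : RealRooted f) (x : ℝ) :
    f.eval x = ∏ j ∈ Finset.range f.natDegree, (x - (sortedRoots f).getD j 0) := by
  conv_lhs => rw [← prod_multiset_X_sub_C_of_monic_of_roots_card_eq hf hr, ← coe_sortedRoots]
  rw [eval_multiset_prod, Multiset.map_map, Multiset.map_coe, Multiset.prod_coe,
    ← hr.length_sortedRoots, ← Fin.prod_univ_eq_prod_range, ← Fin.prod_univ_fun_getElem]
  simp

theorem Polynomial.Monic.neg_one_pow_mul_eval_nonneg (hf : f.Monic) (hr : RealRooted f)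
    {x : ℝ} {m : ℕ} (hm : m ≤ f.natDegree) (hlow : ∀ j < m, (sortedRoots f).getD j 0 ≤ x)
    (hupp : ∀ j, m ≤ j → j < f.natDegree → x ≤ (sortedRoots f).getD j 0) :
    0 ≤ (-1) ^ (f.natDegree - m) * f.eval x := by
  rw [hf.eval_eq_prod_sortedRoots hr, ← Finset.prod_range_mul_prod_Ico _ hm, mul_left_comm,
    ← Nat.card_Ico, ← Finset.prod_const, ← Finset.prod_mul_distrib]
  refine mul_nonneg (Finset.prod_nonneg fun j hj => ?_) (Finset.prod_nonneg fun j hj => ?_)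
  · linarith [hlow j (Finset.mem_range.mp hj)]
  · obtain ⟨hmj, hjn⟩ := Finset.mem_Ico.mp hj
    linarith [hupp j hmj hjn]

theorem le_maxRoot (hf : f ≠ 0) {x : ℝ} (hx : f.IsRoot x) : x ≤ maxRoot f :=
  le_csSup (finite_setOfPred_isRoot hf).bddAbove hx

theorem isRoot_maxRoot (hf : f ≠ 0) (h : ∃ x, f.IsRoot x) : f.IsRoot (maxRoot f) :=
  Set.Nonempty.csSup_mem h (finite_setOfPred_isRoot hf)

theorem RealRooted.maxRoot_eq (hr : RealRooted f) (hf : 0 < f.natDegree) :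
    maxRoot f = (sortedRoots f).getD (f.natDegree - 1) 0 := by
  have hf0 : f ≠ 0 := by rintro rfl; simp at hf
  have hlen := hr.length_sortedRoots
  refine le_antisymm (csSup_le (hr.exists_isRoot hf) fun x hx => ?_) (le_maxRoot hf0 ?_)
  · obtain ⟨i, hi, rfl⟩ := exists_getD_sortedRoots_eq ((mem_roots hf0).mpr hx)
    exact (sortedRoots_sortedLE f).getD_le_getD (by omega) (by omega) 0
  · exact isRoot_of_mem_roots (getD_sortedRoots_mem_roots (by omega) 0)

theorem Polynomial.Monic.eval_pos_of_maxRoot_lt (hf : f.Monic) (hr : RealRooted f) {x : ℝ}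
    (hx : maxRoot f < x) : 0 < f.eval x := by
  have hsign := hf.neg_one_pow_mul_eval_nonneg hr le_rfl
    (fun j hj => ((le_maxRoot hf.ne_zero (isRoot_of_mem_roots
      (getD_sortedRoots_mem_roots (by rwa [hr.length_sortedRoots]) 0))).trans hx.le))
    (fun j hj hj' => absurd hj' (not_lt.mpr hj))
  rw [Nat.sub_self, pow_zero, one_mul] at hsign
  exact hsign.lt_of_ne' fun h0 => lt_irrefl x ((le_maxRoot hf.ne_zero h0).trans_lt hx)

theorem interlaces_iff_countP_le :
    Interlaces g f ↔ RealRooted f ∧ RealRooted g ∧ g.natDegree + 1 = f.natDegree ∧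
      ∀ x, g.roots.countP (· ≤ x) ≤ f.roots.countP (· ≤ x) ∧
        f.roots.countP (· ≤ x) ≤ g.roots.countP (· ≤ x) + 1 := by
  refine and_congr_right fun hf => and_congr_right fun hg => and_congr_right fun hd => ?_
  rw [← hg.length_sortedRoots, List.interlace_iff_countP_le (sortedRoots_sortedLE f)
    (sortedRoots_sortedLE g) (by rw [hf.length_sortedRoots, hg.length_sortedRoots, hd]),
    ← coe_sortedRoots f, ← coe_sortedRoots g]
  simp only [Multiset.coe_countP]

namespace Interlaces

theorem natDegree_eq_natDegree (hi1 : Interlaces g f₁) (hi2 : Interlaces g f₂) :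
    f₁.natDegree = f₂.natDegree :=
  hi1.2.2.1.symm.trans hi2.2.2.1

theorem isRoot_maxRoot (hi : Interlaces g f) : f.IsRoot (maxRoot f) := by
  have hf : 0 < f.natDegree := by rw [← hi.2.2.1]; omega
  exact _root_.isRoot_maxRoot (by rintro rfl; simp at hf) (hi.1.exists_isRoot hf)

theorem of_X_sub_C_mul {c : ℝ} (hf : f ≠ 0) (hg : g ≠ 0)
    (h : Interlaces ((X - C c) * g) ((X - C c) * f)) : Interlaces g f := by
  rw [interlaces_iff_countP_le] at h ⊢
  obtain ⟨hrf, hrg, hd, hcount⟩ := h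
  rw [realRooted_X_sub_C_mul_iff hf] at hrf
  rw [realRooted_X_sub_C_mul_iff hg] at hrg
  rw [natDegree_X_sub_C_mul hf, natDegree_X_sub_C_mul hg] at hd
  refine ⟨hrf, hrg, by omega, fun x => ?_⟩
  have := hcount x
  simp only [roots_X_sub_C_mul hf, roots_X_sub_C_mul hg, Multiset.countP_cons] at this
  omega

theorem root_le_maxRoot (hi : Interlaces g f) {r : ℝ} (hr : r ∈ g.roots) : r ≤ maxRoot f := by
  obtain ⟨hrf, hrg, hd, hint⟩ := hi
  obtain ⟨k, hk, rfl⟩ := exists_getD_sortedRoots_eq hr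
  rw [hrg.length_sortedRoots] at hk
  rw [hrf.maxRoot_eq (by omega)]
  exact (hint k hk).2.trans <| (sortedRoots_sortedLE f).getD_le_getD (by omega)
    (by rw [hrf.length_sortedRoots]; omega) 0

theorem eval_nonpos (hi : Interlaces g f) (hf : f.Monic) {x : ℝ}
    (hgx : ∀ r ∈ g.roots, r ≤ x) (hxf : x ≤ maxRoot f) : f.eval x ≤ 0 := by
  obtain ⟨hrf, hrg, hd, hint⟩ := hi
  have hsign := hf.neg_one_pow_mul_eval_nonneg hrf (m := f.natDegree - 1) (x := x) (by omega)
    (fun j hj => (hint j (by omega)).1.trans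
      (hgx _ (getD_sortedRoots_mem_roots (by rw [hrg.length_sortedRoots]; omega) 0)))
    (fun j hj hj' => by rwa [show j = f.natDegree - 1 by omega, ← hrf.maxRoot_eq (by omega)])
  rw [show f.natDegree - (f.natDegree - 1) = 1 by omega, pow_one] at hsign
  linarith

theorem monotone_getD_cons_sortedRoots {a b : ℝ} (hab : a ≤ b) (ha : ∀ r ∈ g.roots, a ≤ r)
    (hb : ∀ r ∈ g.roots, r ≤ b) : Monotone ((a :: sortedRoots g).getD · b) := by
  refine List.SortedLE.monotone_getD ?_ fun y hy => ?_
  · refine (List.pairwise_cons.mpr ⟨fun y hy => ?_, (sortedRoots_sortedLE g).pairwise⟩).sortedLE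
    exact ha y ((Multiset.mem_sort _).mp hy)
  · rcases List.mem_cons.mp hy with rfl | hy
    · exact hab
    · exact hb y ((Multiset.mem_sort _).mp hy)

-- `(a :: sortedRoots g).getD j b` runs through `a`, the roots of `g`, then `b` for `j ≥ deg f`.
theorem neg_one_pow_mul_eval_getD_nonneg (hi : Interlaces g f) (hf : f.Monic) {a b : ℝ}
    (ha : ∀ r ∈ f.roots, a ≤ r) (hb : ∀ r ∈ f.roots, r ≤ b) {j : ℕ} (hj : j ≤ f.natDegree) :
    0 ≤ (-1) ^ (f.natDegree - j) * f.eval ((a :: sortedRoots g).getD j b) := by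
  obtain ⟨hrf, hrg, hd, hint⟩ := hi
  have hβ : ∀ i < f.natDegree, (sortedRoots f).getD i 0 ∈ f.roots := fun i hi =>
    getD_sortedRoots_mem_roots (by rwa [hrf.length_sortedRoots]) 0
  have hα := sortedRoots_sortedLE g
  have hlen := hrg.length_sortedRoots
  refine hf.neg_one_pow_mul_eval_nonneg hrf hj ?_ ?_
  · cases j with
    | zero => intro i hi; omega
    | succ k =>
      intro i hi
      rw [List.getD_cons_succ]
      by_cases hk : k < g.natDegree
      · rw [← hlen] at hk
        rw [List.getD_eq_getElem _ b hk, ← List.getD_eq_getElem _ 0 hk]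
        exact (hint i (by omega)).1.trans (hα.getD_le_getD (by omega) hk 0)
      · rw [List.getD_eq_default (sortedRoots g) b (by omega)]
        exact hb _ (hβ i (by omega))
  · cases j with
    | zero => exact fun i _ hi => ha _ (hβ i hi)
    | succ k =>
      intro i hki hi
      rw [List.getD_cons_succ, List.getD_eq_getElem _ _ (by omega : k < _),
        ← List.getD_eq_getElem _ 0 (by omega : k < _)]
      obtain ⟨i, rfl⟩ : ∃ i', i = i' + 1 := ⟨i - 1, by omega⟩
      exact (hα.getD_le_getD (by omega) (by omega) 0).trans (hint i (by omega)).2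

theorem realRooted_smul_add_one_sub_smul_of_forall_not_mem (hl0 : 0 < l) (hl1 : l < 1)
    (hi1 : Interlaces g f₁) (hi2 : Interlaces g f₂) (h1 : f₁.Monic) (h2 : f₂.Monic)
    (hcommon : ∀ c ∈ g.roots, c ∈ f₁.roots → c ∉ f₂.roots) :
    RealRooted (l • f₁ + (1 - l) • f₂) := by
  have hd := hi1.natDegree_eq_natDegree hi2
  obtain ⟨a, b, hab, hbounds⟩ := (f₁.roots + f₂.roots + g.roots).exists_forall_mem_Ioo
  have hbounds1 : ∀ r ∈ f₁.roots, a < r ∧ r < b := fun r hr => hbounds r (by simp [hr])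
  have hbounds2 : ∀ r ∈ f₂.roots, a < r ∧ r < b := fun r hr => hbounds r (by simp [hr])
  have hboundsg : ∀ r ∈ g.roots, a < r ∧ r < b := fun r hr => hbounds r (by simp [hr])
  set t : ℕ → ℝ := ((a :: sortedRoots g).getD · b)
  have hnot : ∀ j, ¬(f₁.IsRoot (t j) ∧ f₂.IsRoot (t j)) := by
    rintro (_ | k) ⟨hr1, hr2⟩
    · exact lt_irrefl a (hbounds1 a ((mem_roots h1.ne_zero).mpr hr1)).1
    by_cases hk : k < (sortedRoots g).length
    · exact hcommon _ (getD_sortedRoots_mem_roots hk b) ((mem_roots h1.ne_zero).mpr hr1)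
        ((mem_roots h2.ne_zero).mpr hr2)
    · have htb : t (k + 1) = b := List.getD_eq_default _ _ (by simpa using hk)
      rw [htb] at hr1
      exact lt_irrefl b (hbounds1 b ((mem_roots h1.ne_zero).mpr hr1)).2
  refine RealRooted.of_neg_one_pow_mul_eval_pos (t := t) (monotone_getD_cons_sortedRoots hab.le
    (fun r hr => (hboundsg r hr).1.le) fun r hr => (hboundsg r hr).2.le) fun j hj => ?_
  rw [natDegree_smul_add_one_sub_smul h1 h2 hd] at hj ⊢
  have s1 := hi1.neg_one_pow_mul_eval_getD_nonneg h1 (fun r hr => (hbounds1 r hr).1.le)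
    (fun r hr => (hbounds1 r hr).2.le) (hd ▸ hj)
  have s2 := hi2.neg_one_pow_mul_eval_getD_nonneg h2 (fun r hr => (hbounds2 r hr).1.le)
    (fun r hr => (hbounds2 r hr).2.le) hj
  rw [hd] at s1
  set s : ℝ := (-1) ^ (f₂.natDegree - j)
  have hs : s ≠ 0 := pow_ne_zero _ (by norm_num)
  rw [eval_smul_add_one_sub_smul, show s * (l * f₁.eval (t j) + (1 - l) * f₂.eval (t j)) =
    l * (s * f₁.eval (t j)) + (1 - l) * (s * f₂.eval (t j)) by ring]
  rcases not_and_or.mp (hnot j) with hr | hr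
  · nlinarith [s1.lt_of_ne' (mul_ne_zero hs hr), mul_nonneg (sub_nonneg.mpr hl1.le) s2]
  · nlinarith [s2.lt_of_ne' (mul_ne_zero hs hr), mul_nonneg hl0.le s1]

-- Own binders, not the section variables, which would stay fixed in the recursive call.
theorem realRooted_smul_add_one_sub_smul {l : ℝ} {g f₁ f₂ : ℝ[X]} (hl0 : 0 ≤ l) (hl1 : l ≤ 1)
    (hi1 : Interlaces g f₁) (hi2 : Interlaces g f₂) (h1 : f₁.Monic) (h2 : f₂.Monic) :
    RealRooted (l • f₁ + (1 - l) • f₂) := by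
  rcases hl0.eq_or_lt with rfl | hl0
  · simpa using hi2.1
  rcases hl1.eq_or_lt with rfl | hl1
  · simpa using hi1.1
  by_cases hcommon : ∃ c ∈ g.roots, c ∈ f₁.roots ∧ c ∈ f₂.roots
  swap
  · push Not at hcommon
    exact hi1.realRooted_smul_add_one_sub_smul_of_forall_not_mem hl0 hl1 hi2 h1 h2 hcommon
  obtain ⟨c, hcg, hc1, hc2⟩ := hcommon
  obtain ⟨g', rfl⟩ := dvd_iff_isRoot.mpr (isRoot_of_mem_roots hcg)
  obtain ⟨q₁, rfl⟩ := dvd_iff_isRoot.mpr (isRoot_of_mem_roots hc1)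
  obtain ⟨q₂, rfl⟩ := dvd_iff_isRoot.mpr (isRoot_of_mem_roots hc2)
  have hg' : g' ≠ 0 := right_ne_zero_of_mul (ne_zero_of_mem_roots hcg)
  have hq₁ : q₁.Monic := (monic_X_sub_C c).of_mul_monic_left h1
  have hq₂ : q₂.Monic := (monic_X_sub_C c).of_mul_monic_left h2
  have hi₁ := hi1.of_X_sub_C_mul hq₁.ne_zero hg'
  have hi₂ := hi2.of_X_sub_C_mul hq₂.ne_zero hg'
  have hq : (l • q₁ + (1 - l) • q₂).Monic :=
    hq₁.smul_add_one_sub_smul hq₂ (hi₁.natDegree_eq_natDegree hi₂) l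
  rw [← mul_smul_comm, ← mul_smul_comm, ← mul_add, realRooted_X_sub_C_mul_iff hq.ne_zero]
  exact realRooted_smul_add_one_sub_smul hl0.le hl1.le hi₁ hi₂ hq₁ hq₂
termination_by g.natDegree
decreasing_by subst_vars; rw [natDegree_X_sub_C_mul hg']; omega

theorem min_maxRoot_le_maxRoot_smul_add_one_sub_smul (hl0 : 0 ≤ l) (hl1 : l ≤ 1)
    (hi1 : Interlaces g f₁) (hi2 : Interlaces g f₂) (h1 : f₁.Monic) (h2 : f₂.Monic) :
    min (maxRoot f₁) (maxRoot f₂) ≤ maxRoot (l • f₁ + (1 - l) • f₂) := by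
  have hm := h1.smul_add_one_sub_smul h2 (hi1.natDegree_eq_natDegree hi2) l
  have hr := hi1.realRooted_smul_add_one_sub_smul hl0 hl1 hi2 h1 h2
  suffices ∃ x, min (maxRoot f₁) (maxRoot f₂) ≤ x ∧ (l • f₁ + (1 - l) • f₂).eval x ≤ 0 by
    obtain ⟨x, hx, hneg⟩ := this
    exact hx.trans (not_lt.mp fun hlt => (hm.eval_pos_of_maxRoot_lt hr hlt).not_ge hneg)
  rcases le_total (maxRoot f₁) (maxRoot f₂) with h12 | h21
  · refine ⟨maxRoot f₁, min_le_left _ _, ?_⟩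
    rw [eval_smul_add_one_sub_smul, hi1.isRoot_maxRoot, mul_zero, zero_add]
    exact mul_nonpos_of_nonneg_of_nonpos (by linarith)
      (hi2.eval_nonpos h2 (fun r hr => hi1.root_le_maxRoot hr) h12)
  · refine ⟨maxRoot f₂, min_le_right _ _, ?_⟩
    rw [eval_smul_add_one_sub_smul, hi2.isRoot_maxRoot, mul_zero, add_zero]
    exact mul_nonpos_of_nonneg_of_nonpos hl0
      (hi1.eval_nonpos h1 (fun r hr => hi2.root_le_maxRoot hr) h21)

theorem maxRoot_smul_add_one_sub_smul_le (hl0 : 0 ≤ l) (hl1 : l ≤ 1)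
    (hi1 : Interlaces g f₁) (hi2 : Interlaces g f₂) (h1 : f₁.Monic) (h2 : f₂.Monic) :
    maxRoot (l • f₁ + (1 - l) • f₂) ≤ max (maxRoot f₁) (maxRoot f₂) := by
  have hr := hi1.realRooted_smul_add_one_sub_smul hl0 hl1 hi2 h1 h2
  have hdeg : 0 < (l • f₁ + (1 - l) • f₂).natDegree := by
    rw [natDegree_smul_add_one_sub_smul h1 h2 (hi1.natDegree_eq_natDegree hi2), ← hi2.2.2.1]
    omega
  refine csSup_le (hr.exists_isRoot hdeg) fun x hx => not_lt.mp fun hlt => ?_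
  have p1 := h1.eval_pos_of_maxRoot_lt hi1.1 ((le_max_left _ _).trans_lt hlt)
  have p2 := h2.eval_pos_of_maxRoot_lt hi2.1 ((le_max_right _ _).trans_lt hlt)
  have hpos : 0 < l * f₁.eval x + (1 - l) * f₂.eval x :=
    convex_Ioi (0 : ℝ) p1 p2 hl0 (sub_nonneg.mpr hl1) (add_sub_cancel l 1)
  exact hpos.ne' (by rw [← eval_smul_add_one_sub_smul]; exact hx)

end Interlaces

theorem convex_combination_realRooted_of_common_interlacing_general
    (g f₁ f₂ : Polynomial ℝ) (h1 : f₁.Monic) (h2 : f₂.Monic)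
    (hi1 : Interlaces g f₁) (hi2 : Interlaces g f₂) :
    ∀ l : ℝ, 0 ≤ l → l ≤ 1 →
      RealRooted (l • f₁ + (1 - l) • f₂) ∧
      min (maxRoot f₁) (maxRoot f₂) ≤ maxRoot (l • f₁ + (1 - l) • f₂) ∧
      maxRoot (l • f₁ + (1 - l) • f₂) ≤ max (maxRoot f₁) (maxRoot f₂) := fun _ hl0 hl1 =>
  ⟨hi1.realRooted_smul_add_one_sub_smul hl0 hl1 hi2 h1 h2,
    hi1.min_maxRoot_le_maxRoot_smul_add_one_sub_smul hl0 hl1 hi2 h1 h2,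
    hi1.maxRoot_smul_add_one_sub_smul_le hl0 hl1 hi2 h1 h2⟩

/-- Convex combinations of two monic real-rooted polynomials with a common interlacer
are real-rooted, with largest root between the largest roots of the two polynomials. -/
theorem convex_combination_realRooted_of_common_interlacing (n : ℕ)
    (g f₁ f₂ : Polynomial ℝ) (hg : g.Monic) (h1 : f₁.Monic) (h2 : f₂.Monic)
    (hd1 : f₁.natDegree = n) (hd2 : f₂.natDegree = n)
    (hi1 : Interlaces g f₁) (hi2 : Interlaces g f₂) :
    ∀ l : ℝ, 0 ≤ l → l ≤ 1 →
      RealRooted (l • f₁ + (1 - l) • f₂) ∧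
      min (maxRoot f₁) (maxRoot f₂) ≤ maxRoot (l • f₁ + (1 - l) • f₂) ∧
      maxRoot (l • f₁ + (1 - l) • f₂) ≤ max (maxRoot f₁) (maxRoot f₂) :=
  convex_combination_realRooted_of_common_interlacing_general g f₁ f₂ h1 h2 hi1 hi2
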